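/- arXiv:2007.06161 — 4 statements merged into one kernel-verified Lean document; each statement's English description precedes it below -/
import Mathlib

section
/- Let θ be an automorphism of a finite generalised quadrangle of order (s,t) whose order is a prime x with x > s+1 and x > t+1. Then θ fixes no point of the quadrangle. -/
/-- A (finite) generalised quadrangle of order `(s, t)`: every line is incident
with exactly `s + 1` points, every point is incident with exactly `t + 1` lines,
any two distinct points lie on at most one common line, and for every
non-incident point-line pair `(p, l)` there is a unique point on `l`
collinear with `p`. -/
structure GenQuadrangle (P L : Type*) (s t : ℕ) where
  inc : P → L → Prop
  pts_per_line : ∀ l : L, Nat.card {p : P // inc p l} = s + 1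
  lines_per_pt : ∀ p : P, Nat.card {l : L // inc p l} = t + 1
  unique_line : ∀ ⦃p q : P⦄ ⦃l m : L⦄, p ≠ q →
      inc p l → inc q l → inc p m → inc q m → l = m
  gq_axiom : ∀ (p : P) (l : L), ¬ inc p l →
      ∃! q : P, inc q l ∧ ∃ m : L, inc p m ∧ inc q m

/-- Two points are collinear if they are distinct and lie on a common line. -/
def GenQuadrangle.Collinear {P L : Type*} {s t : ℕ} (Q : GenQuadrangle P L s t)
    (p q : P) : Prop :=
  p ≠ q ∧ ∃ l : L, Q.inc p l ∧ Q.inc q l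

/-- An automorphism of a generalised quadrangle: a pair of permutations of the
points and of the lines which together preserve incidence. -/
structure GenQuadrangle.Auto {P L : Type*} {s t : ℕ} (Q : GenQuadrangle P L s t) where
  permP : Equiv.Perm P
  permL : Equiv.Perm L
  pres : ∀ (p : P) (l : L), Q.inc p l ↔ Q.inc (permP p) (permL l)

/-!
An automorphism `θ` of prime order `x` permutes the `t + 1` lines through a fixed point in
orbits of length `1` or `x`; since `t + 1 < x`, it fixes each of them, and dually it fixes every
point of a fixed line. Any two points of a generalised quadrangle are joined by a path
point–line–point–line–point, so a single fixed point propagates to all points and then to all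
lines, forcing `θ = 1`, which contradicts `x` being prime.
-/

open Function Set

theorem Equiv.Perm.apply_eq_self_of_pow_prime_eq_one_of_ncard_lt {α : Type*} {σ : Equiv.Perm α}
    {p : ℕ} (hp : p.Prime) (hσ : σ ^ p = 1) {S : Set α} (hSfin : S.Finite) (hS : MapsTo σ S S)
    (hcard : S.ncard < p) {a : α} (ha : a ∈ S) : σ a = a := by
  have hper : IsPeriodicPt σ p a := by
    rw [IsPeriodicPt, IsFixedPt, Equiv.Perm.iterate_eq_pow, hσ, Equiv.Perm.one_apply]
  rcases (Nat.dvd_prime hp).mp hper.minimalPeriod_dvd with h1 | hfull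
  · exact minimalPeriod_eq_one_iff_isFixedPt.mp h1
  · -- a nontrivial orbit has `p` distinct elements, all in `S`
    have := Set.ncard_le_ncard_of_injOn (σ^[·] a) (fun n _ => hS.iterate n ha)
      (hfull ▸ iterate_injOn_Iio_minimalPeriod) hSfin
    rw [Set.ncard_Iio_nat] at this
    omega

namespace GenQuadrangle

variable {P L : Type*} {s t : ℕ} (Q : GenQuadrangle P L s t)

theorem exists_line_through (p : P) : ∃ l, Q.inc p l := by
  have : Nat.card {l // Q.inc p l} ≠ 0 := by rw [Q.lines_per_pt]; omega
  obtain ⟨⟨l, hl⟩⟩ := (Nat.card_ne_zero.mp this).1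
  exact ⟨l, hl⟩

theorem exists_point_on (l : L) : ∃ p, Q.inc p l := by
  have : Nat.card {p // Q.inc p l} ≠ 0 := by rw [Q.pts_per_line]; omega
  obtain ⟨⟨p, hp⟩⟩ := (Nat.card_ne_zero.mp this).1
  exact ⟨p, hp⟩

theorem exists_incidence_path (p q : P) :
    ∃ (n : L) (r : P) (m : L), Q.inc p n ∧ Q.inc r n ∧ Q.inc r m ∧ Q.inc q m := by
  obtain ⟨m, hqm⟩ := Q.exists_line_through q
  by_cases hpm : Q.inc p m
  · exact ⟨m, p, m, hpm, hpm, hpm, hqm⟩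
  · obtain ⟨r, ⟨hrm, n, hpn, hrn⟩, -⟩ := Q.gq_axiom p m hpm
    exact ⟨n, r, m, hpn, hrn, hrm, hqm⟩

namespace Auto

variable {Q} (θ : Q.Auto) {x : ℕ}

theorem fixes_lines_through_fixed_point [Finite L] (hx : x.Prime) (hθ : θ.permL ^ x = 1)
    (hxt : t + 1 < x) {p : P} {l : L} (hp : θ.permP p = p) (hl : Q.inc p l) :
    θ.permL l = l := by
  refine θ.permL.apply_eq_self_of_pow_prime_eq_one_of_ncard_lt (S := {m | Q.inc p m}) hx hθ
    (toFinite _) (fun m hm => ?_) ((Q.lines_per_pt p).trans_lt hxt) hl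
  simpa only [mem_ofPred_eq, hp] using (θ.pres p m).mp hm

theorem fixes_points_on_fixed_line [Finite P] (hx : x.Prime) (hθ : θ.permP ^ x = 1)
    (hxs : s + 1 < x) {l : L} {p : P} (hl : θ.permL l = l) (hp : Q.inc p l) :
    θ.permP p = p := by
  refine θ.permP.apply_eq_self_of_pow_prime_eq_one_of_ncard_lt (S := {q | Q.inc q l}) hx hθ
    (toFinite _) (fun q hq => ?_) ((Q.pts_per_line l).trans_lt hxs) hp
  simpa only [mem_ofPred_eq, hl] using (θ.pres q l).mp hq

theorem eq_one_of_permP_apply_eq_self [Finite P] [Finite L] (hx : x.Prime)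
    (hθ : (θ.permP, θ.permL) ^ x = 1) (hxs : s + 1 < x) (hxt : t + 1 < x) {p : P}
    (hp : θ.permP p = p) : (θ.permP, θ.permL) = 1 := by
  obtain ⟨hθP, hθL⟩ := Prod.ext_iff.mp hθ
  have hA : ∀ {q l}, θ.permP q = q → Q.inc q l → θ.permL l = l :=
    θ.fixes_lines_through_fixed_point hx hθL hxt
  have hB : ∀ {l q}, θ.permL l = l → Q.inc q l → θ.permP q = q :=
    θ.fixes_points_on_fixed_line hx hθP hxs
  have hP : ∀ q, θ.permP q = q := fun q => by
    obtain ⟨n, r, m, hpn, hrn, hrm, hqm⟩ := Q.exists_incidence_path p q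
    exact hB (hA (hB (hA hp hpn) hrn) hrm) hqm
  have hL : ∀ l, θ.permL l = l := fun l => by
    obtain ⟨q, hq⟩ := Q.exists_point_on l
    exact hA (hP q) hq
  exact Prod.ext (Equiv.ext hP) (Equiv.ext hL)

end Auto

end GenQuadrangle

/-- An automorphism of a finite generalised quadrangle of order (s,t) whose
order is a prime x with x > s+1 and x > t+1 fixes no point. -/
theorem auto_of_large_prime_order_fixes_no_point {P L : Type*} [Fintype P] [Fintype L]
    {s t x : ℕ} (Q : GenQuadrangle P L s t) (θ : Q.Auto)
    (hx : x.Prime) (hord : orderOf (θ.permP, θ.permL) = x)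
    (hxs : s + 1 < x) (hxt : t + 1 < x) :
    ∀ p : P, θ.permP p ≠ p := by
  intro p hp
  have hθ := θ.eq_one_of_permP_apply_eq_self hx (hord ▸ pow_orderOf_eq_one _) hxs hxt hp
  rw [hθ, orderOf_one] at hord
  exact hx.one_lt.ne hord
end

section
/- Let G be a group of automorphisms of a finite generalised quadrangle of order (s,t) acting transitively on the point set, and let O be an orbit of G on lines. Then st+1 divides |O|. -/
/-! Fix a line `l`. Every point either lies on `l` or is collinear with exactly one point of
`l` (the quadrangle axiom), and each point of `l` is collinear with `s * t` points off `l`; hence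
`|P| = (s + 1)(s t + 1)`. Counting the incident pairs `(p, m)` with `m ∈ O` in two ways gives
`|P| n = |O| (s + 1)`, where `n`, the number of lines of `O` through a point, does not depend on
the point because `G` is transitive on points. Cancelling `s + 1` leaves `|O| = (s t + 1) n`. -/

open Finset MulAction

namespace GenQuadrangle

open scoped Classical

variable {P L : Type*} {s t : ℕ} (Q : GenQuadrangle P L s t)

noncomputable def pointsOn [Fintype P] (l : L) : Finset P := {p | Q.inc p l}

noncomputable def linesThrough [Fintype L] (p : P) : Finset L := {l | Q.inc p l}

variable {Q}

@[simp] lemma mem_pointsOn [Fintype P] {p : P} {l : L} : p ∈ Q.pointsOn l ↔ Q.inc p l := by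
  simp [pointsOn]

@[simp] lemma mem_linesThrough [Fintype L] {p : P} {l : L} :
    l ∈ Q.linesThrough p ↔ Q.inc p l := by
  simp [linesThrough]

variable (Q)

lemma card_pointsOn [Fintype P] (l : L) : #(Q.pointsOn l) = s + 1 := by
  rw [pointsOn, ← Fintype.card_subtype, ← Nat.card_eq_fintype_card, Q.pts_per_line]

lemma card_linesThrough [Fintype L] (p : P) : #(Q.linesThrough p) = t + 1 := by
  rw [linesThrough, ← Fintype.card_subtype, ← Nat.card_eq_fintype_card, Q.lines_per_pt]

lemma card_biUnion_pointsOn_erase [Fintype P] {r : P} {S : Finset L} (hS : ∀ m ∈ S, Q.inc r m) :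
    #(S.biUnion fun m => (Q.pointsOn m).erase r) = #S * s := by
  rw [card_biUnion, sum_const_nat fun m hm => ?_]
  · rw [card_erase_of_mem (mem_pointsOn.2 (hS m hm)), card_pointsOn, Nat.add_sub_cancel]
  · intro m hm m' hm' hne
    refine disjoint_left.2 fun q hq hq' => hne ?_
    simp only [mem_erase, mem_pointsOn] at hq hq'
    exact Q.unique_line hq.1 hq.2 (hS m hm) hq'.2 (hS m' hm')

def IsProjection (l : L) (q r : P) : Prop :=
  Q.inc r l ∧ (q = r ∨ ¬ Q.inc q l ∧ Q.Collinear q r)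

lemma existsUnique_isProjection (l : L) (q : P) : ∃! r, Q.IsProjection l q r := by
  by_cases hq : Q.inc q l
  · refine ⟨q, ⟨hq, Or.inl rfl⟩, fun r hr => ?_⟩
    rcases hr with ⟨-, rfl | ⟨hq', -⟩⟩
    exacts [rfl, absurd hq hq']
  · obtain ⟨r, ⟨hr, m, hqm, hrm⟩, huniq⟩ := Q.gq_axiom q l hq
    have hqr : q ≠ r := fun h => hq (h ▸ hr)
    refine ⟨r, ⟨hr, Or.inr ⟨hq, hqr, m, hqm, hrm⟩⟩, fun r' hr' => ?_⟩
    rcases hr' with ⟨hr'l, rfl | ⟨-, -, m', hqm', hr'm'⟩⟩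
    exacts [absurd hr'l hq, huniq r' ⟨hr'l, m', hqm', hr'm'⟩]

lemma filter_isProjection_eq [Fintype P] [Fintype L] {l : L} {r : P} (hr : Q.inc r l) :
    ({q | Q.IsProjection l q r} : Finset P) =
      insert r (((Q.linesThrough r).erase l).biUnion fun m => (Q.pointsOn m).erase r) := by
  ext q
  simp only [IsProjection, Collinear, mem_filter, mem_univ, true_and, mem_insert, mem_biUnion,
    mem_erase, mem_linesThrough, mem_pointsOn, hr]
  constructor
  · rintro (rfl | ⟨hq, hqr, m, hqm, hrm⟩)
    · exact Or.inl rfl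
    · exact Or.inr ⟨m, ⟨fun h => hq (h ▸ hqm), hrm⟩, hqr, hqm⟩
  · rintro (rfl | ⟨m, ⟨hml, hrm⟩, hqr, hqm⟩)
    · exact Or.inl rfl
    · exact Or.inr ⟨fun hq => hml (Q.unique_line hqr hqm hrm hq hr), hqr, m, hqm, hrm⟩

lemma card_filter_isProjection [Fintype P] [Fintype L] {l : L} {r : P} (hr : Q.inc r l) :
    #({q | Q.IsProjection l q r} : Finset P) = s * t + 1 := by
  rw [filter_isProjection_eq Q hr, card_insert_of_notMem, card_biUnion_pointsOn_erase]
  · rw [card_erase_of_mem (mem_linesThrough.2 hr), card_linesThrough, Nat.add_sub_cancel,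
      mul_comm]
  · simp
  · simp

include Q in
theorem card_points [Fintype P] [Fintype L] (l : L) : Fintype.card P = (s + 1) * (s * t + 1) := by
  have h := card_mul_eq_card_mul (s := univ) (t := Q.pointsOn l) (Q.IsProjection l)
    (m := 1) (n := s * t + 1) (fun q _ => ?_) (fun r hr => ?_)
  · rwa [card_univ, mul_one, card_pointsOn] at h
  · obtain ⟨r, hr, huniq⟩ := Q.existsUnique_isProjection l q
    refine card_eq_one.2 ⟨r, eq_singleton_iff_unique_mem.2 ⟨?_, fun r' hr' => ?_⟩⟩
    · exact mem_filter.2 ⟨mem_pointsOn.2 hr.1, hr⟩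
    · exact huniq r' (mem_filter.1 hr').2
  · exact Q.card_filter_isProjection (mem_pointsOn.1 hr)

lemma card_filter_orbit_inc_smul [Fintype L] {G : Type*} [Group G] [MulAction G P]
    [MulAction G L] {g : G} (hg : ∀ p l, Q.inc p l ↔ Q.inc (g • p) (g • l)) (l₀ : L) (p : P) :
    #{l ∈ (orbit G l₀).toFinset | Q.inc (g • p) l} =
      #{l ∈ (orbit G l₀).toFinset | Q.inc p l} := by
  refine card_nbij' (g⁻¹ • ·) (g • ·) (fun l hl => ?_) (fun l hl => ?_)
    (fun l _ => smul_inv_smul g l) (fun l _ => inv_smul_smul g l)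
  · simp only [coe_filter, Set.mem_toFinset, Set.mem_ofPred_eq] at hl ⊢
    exact ⟨mem_orbit_of_mem_orbit _ hl.1, by rw [hg, smul_inv_smul]; exact hl.2⟩
  · simp only [coe_filter, Set.mem_toFinset, Set.mem_ofPred_eq] at hl ⊢
    exact ⟨mem_orbit_of_mem_orbit _ hl.1, (hg p l).1 hl.2⟩

end GenQuadrangle

theorem card_line_orbit_dvd_general {P L : Type*} [Fintype P] [Fintype L]
    {s t : ℕ} (Q : GenQuadrangle P L s t)
    (G : Type*) [Group G] [MulAction G P] [MulAction G L]
    (hcompat : ∀ (g : G) (p : P) (l : L), Q.inc p l ↔ Q.inc (g • p) (g • l))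
    [MulAction.IsPretransitive G P] (l₀ : L) :
    (s * t + 1) ∣ Nat.card (MulAction.orbit G l₀) := by
  classical
  obtain ⟨p₀, -⟩ : (Q.pointsOn l₀).Nonempty :=
    card_pos.1 (by rw [Q.card_pointsOn]; exact s.add_one_pos)
  set O := (orbit G l₀).toFinset
  set n := #{l ∈ O | Q.inc p₀ l}
  have hflags : Fintype.card P * n = #O * (s + 1) := by
    refine card_mul_eq_card_mul Q.inc (fun p _ => ?_) fun l _ => Q.card_pointsOn l
    obtain ⟨g, rfl⟩ := exists_smul_eq G p₀ p
    exact Q.card_filter_orbit_inc_smul (hcompat g) l₀ p₀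
  have hO : (s * t + 1) * n = #O := by
    refine Nat.eq_of_mul_eq_mul_right s.add_one_pos ?_
    rw [← hflags, Q.card_points l₀]
    ring
  rw [Nat.card_eq_card_toFinset, ← hO]
  exact dvd_mul_right _ _

/-- The size of any line orbit of a point-transitive automorphism group of a
finite generalised quadrangle of order (s,t) is divisible by st+1. -/
theorem card_line_orbit_dvd {P L : Type*} [Fintype P] [Fintype L]
    {s t : ℕ} (hs : 1 ≤ s) (ht : 1 ≤ t) (Q : GenQuadrangle P L s t)
    (G : Type*) [Group G] [MulAction G P] [MulAction G L]
    (hcompat : ∀ (g : G) (p : P) (l : L), Q.inc p l ↔ Q.inc (g • p) (g • l))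
    [MulAction.IsPretransitive G P] (l₀ : L) :
    (s * t + 1) ∣ Nat.card (MulAction.orbit G l₀) :=
  card_line_orbit_dvd_general Q G hcompat l₀
end

section
/- If the line set of a finite generalised quadrangle of order (s,t) can be partitioned into two parts of equal size, each of which is a line orbit of a point-transitive automorphism group, then t is odd, and each part is a hemisystem: every point lies on exactly (t+1)/2 lines of each part. -/
open MulAction Finset

section Aux
variable {P L : Type*} [Fintype P] [Fintype L] {s t : ℕ} (Q : GenQuadrangle P L s t)
variable (G : Type*) [Group G] [MulAction G P] [MulAction G L]

/-- line count through a point in an orbit is G-equivariantly invariant -/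
lemma aux_card_smul (hcompat : ∀ (g : G) (p : P) (l : L), Q.inc p l ↔ Q.inc (g • p) (g • l))
    (l₀ : L) (g : G) (p : P) :
    Nat.card {l : L // l ∈ orbit G l₀ ∧ Q.inc p l}
      = Nat.card {l : L // l ∈ orbit G l₀ ∧ Q.inc (g • p) l} := by
  apply Nat.card_congr
  refine ⟨fun x => ⟨g • x.1, ?_, ?_⟩, fun x => ⟨g⁻¹ • x.1, ?_, ?_⟩, ?_, ?_⟩
  · obtain ⟨h, hh⟩ := x.2.1
    exact ⟨g * h, by dsimp only at hh ⊢; rw [mul_smul, hh]⟩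
  · exact (hcompat g p x.1).mp x.2.2
  · obtain ⟨h, hh⟩ := x.2.1
    exact ⟨g⁻¹ * h, by dsimp only at hh ⊢; rw [mul_smul, hh]⟩
  · have := (hcompat g⁻¹ (g • p) x.1).mp x.2.2
    simpa using this
  · intro x; ext; simp
  · intro x; ext; simp

lemma aux_card_const (hcompat : ∀ (g : G) (p : P) (l : L), Q.inc p l ↔ Q.inc (g • p) (g • l))
    [IsPretransitive G P] (l₀ : L) (p q : P) :
    Nat.card {l : L // l ∈ orbit G l₀ ∧ Q.inc p l}
      = Nat.card {l : L // l ∈ orbit G l₀ ∧ Q.inc q l} := by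
  obtain ⟨g, rfl⟩ := exists_smul_eq G p q
  exact aux_card_smul Q G hcompat l₀ g p

/-- double counting -/
lemma aux_double_count (l₀ : L) (k : ℕ)
    (hk : ∀ p : P, Nat.card {l : L // l ∈ orbit G l₀ ∧ Q.inc p l} = k) :
    Nat.card (orbit G l₀) * (s + 1) = Fintype.card P * k := by
  classical
  have e1 : Nat.card {x : L × P // x.1 ∈ orbit G l₀ ∧ Q.inc x.2 x.1}
      = ∑ l : L, Nat.card {p : P // l ∈ orbit G l₀ ∧ Q.inc p l} := by
    rw [Nat.card_congr (Equiv.subtypeProdEquivSigmaSubtype (fun l p => l ∈ orbit G l₀ ∧ Q.inc p l)),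
      Nat.card_eq_fintype_card, Fintype.card_sigma]
    simp [Nat.card_eq_fintype_card]
  have e2 : Nat.card {x : L × P // x.1 ∈ orbit G l₀ ∧ Q.inc x.2 x.1}
      = ∑ p : P, Nat.card {l : L // l ∈ orbit G l₀ ∧ Q.inc p l} := by
    have e : {x : L × P // x.1 ∈ orbit G l₀ ∧ Q.inc x.2 x.1} ≃
        (a : P) × {b : L // b ∈ orbit G l₀ ∧ Q.inc a b} := (((Equiv.prodComm L P).subtypeEquiv
        (q := fun x : P × L => x.2 ∈ orbit G l₀ ∧ Q.inc x.1 x.2) (fun x => Iff.rfl)).trans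
      (Equiv.subtypeProdEquivSigmaSubtype (fun (p : P) (l : L) => l ∈ orbit G l₀ ∧ Q.inc p l)))
    rw [Nat.card_congr e, Nat.card_eq_fintype_card, Fintype.card_sigma]
    simp [Nat.card_eq_fintype_card]
  have e3 : ∀ l : L, Nat.card {p : P // l ∈ orbit G l₀ ∧ Q.inc p l}
      = if l ∈ orbit G l₀ then s + 1 else 0 := by
    intro l
    by_cases hl : l ∈ orbit G l₀
    · rw [if_pos hl, ← Q.pts_per_line l]
      exact Nat.card_congr (Equiv.subtypeEquivRight (fun p => by simp [hl]))
    · rw [if_neg hl]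
      have : IsEmpty {p : P // l ∈ orbit G l₀ ∧ Q.inc p l} := ⟨fun x => hl x.2.1⟩
      exact Nat.card_of_isEmpty
  have e4 : Nat.card (orbit G l₀) = (univ.filter (· ∈ orbit G l₀)).card := by
    rw [Nat.card_eq_fintype_card, Fintype.card_subtype]
  calc Nat.card (orbit G l₀) * (s + 1)
      = ∑ l : L, Nat.card {p : P // l ∈ orbit G l₀ ∧ Q.inc p l} := by
        simp only [e3, e4]
        rw [← Finset.sum_filter, Finset.sum_const, smul_eq_mul]
    _ = ∑ p : P, Nat.card {l : L // l ∈ orbit G l₀ ∧ Q.inc p l} := by rw [← e1, e2]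
    _ = Fintype.card P * k := by
        rw [Finset.sum_congr rfl (fun p _ => hk p), Finset.sum_const, Finset.card_univ,
          smul_eq_mul]

end Aux

/-- If the line set of a finite generalised quadrangle of order (s,t) is
partitioned into two line orbits of equal size of a point-transitive
automorphism group, then t is odd and each orbit is a hemisystem: every point
lies on exactly (t+1)/2 lines of each orbit. -/
theorem equal_line_orbits_are_hemisystems {P L : Type*} [Fintype P] [Fintype L]
    {s t : ℕ} (Q : GenQuadrangle P L s t)
    (G : Type*) [Group G] [MulAction G P] [MulAction G L]
    (hcompat : ∀ (g : G) (p : P) (l : L), Q.inc p l ↔ Q.inc (g • p) (g • l))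
    [MulAction.IsPretransitive G P] (l₁ l₂ : L)
    (hunion : MulAction.orbit G l₁ ∪ MulAction.orbit G l₂ = Set.univ)
    (hdisj : Disjoint (MulAction.orbit G l₁) (MulAction.orbit G l₂))
    (hsize : Nat.card (MulAction.orbit G l₁) = Nat.card (MulAction.orbit G l₂)) :
    Odd t ∧
      (∀ p : P, Nat.card {l : L // l ∈ MulAction.orbit G l₁ ∧ Q.inc p l} = (t + 1) / 2) ∧
      (∀ p : P, Nat.card {l : L // l ∈ MulAction.orbit G l₂ ∧ Q.inc p l} = (t + 1) / 2) := by
  classical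
  -- P is nonempty
  have hPne : Nonempty P := by
    have := Q.pts_per_line l₁
    have : Nat.card {p : P // Q.inc p l₁} ≠ 0 := by omega
    have := Nat.card_pos_iff.mp (Nat.pos_of_ne_zero this)
    exact ⟨this.1.some.1⟩
  have hP : 0 < Fintype.card P := Fintype.card_pos_iff.mpr hPne
  -- constant counts
  set p₀ : P := hPne.some
  set k₁ := Nat.card {l : L // l ∈ MulAction.orbit G l₁ ∧ Q.inc p₀ l} with hk₁def
  set k₂ := Nat.card {l : L // l ∈ MulAction.orbit G l₂ ∧ Q.inc p₀ l} with hk₂def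
  have hc₁ : ∀ p : P, Nat.card {l : L // l ∈ MulAction.orbit G l₁ ∧ Q.inc p l} = k₁ :=
    fun p => aux_card_const Q G hcompat l₁ p p₀
  have hc₂ : ∀ p : P, Nat.card {l : L // l ∈ MulAction.orbit G l₂ ∧ Q.inc p l} = k₂ :=
    fun p => aux_card_const Q G hcompat l₂ p p₀
  -- k₁ = k₂ from double counting and equal orbit sizes
  have hd₁ := aux_double_count Q G l₁ k₁ hc₁
  have hd₂ := aux_double_count Q G l₂ k₂ hc₂
  have hkeq : k₁ = k₂ := by
    rw [hsize, hd₂] at hd₁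
    exact (Nat.eq_of_mul_eq_mul_left hP hd₁.symm)
  -- k₁ + k₂ = t + 1
  have hsum : ∀ p : P, k₁ + k₂ = t + 1 := by
    intro p
    have hpart : Nat.card {l : L // Q.inc p l}
        = Nat.card {l : L // l ∈ MulAction.orbit G l₁ ∧ Q.inc p l}
          + Nat.card {l : L // l ∈ MulAction.orbit G l₂ ∧ Q.inc p l} := by
      simp only [Nat.card_eq_fintype_card, Fintype.card_subtype]
      rw [← Finset.card_union_of_disjoint]
      · congr 1
        ext l
        simp only [Finset.mem_union, Finset.mem_filter, Finset.mem_univ, true_and]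
        constructor
        · intro hl
          have : l ∈ MulAction.orbit G l₁ ∪ MulAction.orbit G l₂ := hunion ▸ Set.mem_univ l
          rcases this with h | h
          · exact Or.inl ⟨h, hl⟩
          · exact Or.inr ⟨h, hl⟩
        · rintro (⟨_, hl⟩ | ⟨_, hl⟩) <;> exact hl
      · rw [Finset.disjoint_filter]
        intro l _ h₁ h₂
        exact Set.disjoint_left.mp hdisj h₁.1 h₂.1
    rw [Q.lines_per_pt p, hc₁ p, hc₂ p] at hpart
    omega
  have hsum' := hsum p₀
  have ht : t + 1 = 2 * k₁ := by omega
  refine ⟨⟨k₁ - 1, by omega⟩, fun p => ?_, fun p => ?_⟩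
  · rw [hc₁ p]; omega
  · rw [hc₂ p]; omega
end

section
/- In a finite thick generalised quadrangle of order (s,t), s ≤ t² (Higman's inequality). -/
open Finset
set_option linter.unusedSectionVars false

namespace GenQuadrangle

open scoped Classical

variable {P L : Type*} [Fintype P] [Fintype L] {s t : ℕ} (Q : GenQuadrangle P L s t)

noncomputable def pts (l : L) : Finset P := Finset.univ.filter (fun p => Q.inc p l)
noncomputable def lns (p : P) : Finset L := Finset.univ.filter (fun l => Q.inc p l)
noncomputable def perp (x : P) : Finset P := Finset.univ.filter (fun z => Q.Collinear x z)

@[simp] lemma mem_pts {p : P} {l : L} : p ∈ Q.pts l ↔ Q.inc p l := by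
  simp [pts]

@[simp] lemma mem_lns {p : P} {l : L} : l ∈ Q.lns p ↔ Q.inc p l := by
  simp [lns]

@[simp] lemma mem_perp {x z : P} : z ∈ Q.perp x ↔ Q.Collinear x z := by
  simp [perp]

lemma coll_symm {x z : P} (h : Q.Collinear x z) : Q.Collinear z x :=
  ⟨h.1.symm, h.2.imp fun _ hl => ⟨hl.2, hl.1⟩⟩

lemma coll_irrefl (x : P) : ¬ Q.Collinear x x := fun h => h.1 rfl

lemma card_pts (l : L) : (Q.pts l).card = s + 1 := by
  have h := Q.pts_per_line l
  rwa [Nat.card_eq_fintype_card, Fintype.card_subtype] at h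

lemma card_lns (p : P) : (Q.lns p).card = t + 1 := by
  have h := Q.lines_per_pt p
  rwa [Nat.card_eq_fintype_card, Fintype.card_subtype] at h

lemma unique_coll_on_line {x : P} {l : L} (h : ¬Q.inc x l) :
    ∃! q : P, Q.inc q l ∧ Q.Collinear x q := by
  obtain ⟨q, ⟨hql, hm⟩, huniq⟩ := Q.gq_axiom x l h
  refine ⟨q, ⟨hql, ?_, hm⟩, fun q' h' => huniq q' ⟨h'.1, h'.2.2⟩⟩
  rintro rfl; exact h hql

lemma coll_on_line_eq {x : P} {l : L} (h : ¬Q.inc x l) {w w' : P}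
    (hw : Q.inc w l) (hw' : Q.inc w' l) (hcw : Q.Collinear x w)
    (hcw' : Q.Collinear x w') : w = w' := by
  obtain ⟨q, _, huniq⟩ := Q.unique_coll_on_line h
  rw [huniq w ⟨hw, hcw⟩, huniq w' ⟨hw', hcw'⟩]

lemma coll_of_line {w x : P} {l : L} (hw : Q.inc w l) (hx : Q.inc x l)
    (h : w ≠ x) : Q.Collinear w x := ⟨h, l, hw, hx⟩

/-- points collinear to both of a collinear pair lie on their common line -/
lemma perp_inter_eq {w x : P} {l : L} (hwx : w ≠ x) (hw : Q.inc w l)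
    (hx : Q.inc x l) : Q.perp w ∩ Q.perp x = Q.pts l \ {w, x} := by
  ext z
  simp only [mem_inter, mem_perp, mem_sdiff, mem_pts, mem_insert, mem_singleton]
  constructor
  · rintro ⟨hzw, hzx⟩
    have hzl : Q.inc z l := by
      by_contra hzl
      exact hwx (Q.coll_on_line_eq hzl hw hx (Q.coll_symm hzw) (Q.coll_symm hzx))
    exact ⟨hzl, fun hz => by rcases hz with rfl | rfl
                             exacts [Q.coll_irrefl z hzw, Q.coll_irrefl z hzx]⟩
  · rintro ⟨hzl, hz⟩
    push_neg at hz
    exact ⟨Q.coll_of_line hw hzl (Ne.symm hz.1), Q.coll_of_line hx hzl (Ne.symm hz.2)⟩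

lemma card_perp_inter {w x : P} (h : Q.Collinear w x) :
    (Q.perp w ∩ Q.perp x).card + 2 = s + 1 := by
  obtain ⟨hne, l, hw, hx⟩ := h
  have hsub : ({w, x} : Finset P) ⊆ Q.pts l := by
    intro z hz
    simp only [mem_insert, mem_singleton] at hz
    rcases hz with rfl | rfl <;> simp [hw, hx]
  have key := Finset.card_sdiff_add_card_eq_card hsub
  rw [Q.card_pts, card_pair hne] at key
  rw [Q.perp_inter_eq hne hw hx]
  omega

lemma card_perp (x : P) : (Q.perp x).card = s * (t + 1) := by
  have heq : Q.perp x = (Q.lns x).biUnion (fun l => Q.pts l \ {x}) := by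
    ext z
    simp only [mem_perp, mem_biUnion, mem_lns, mem_sdiff, mem_pts, mem_singleton]
    constructor
    · rintro ⟨hne, l, hxl, hzl⟩
      exact ⟨l, hxl, hzl, Ne.symm hne⟩
    · rintro ⟨l, hxl, hzl, hne⟩
      exact ⟨Ne.symm hne, l, hxl, hzl⟩
  have hdisj : ∀ l ∈ Q.lns x, ∀ m ∈ Q.lns x, l ≠ m →
      Disjoint (Q.pts l \ {x}) (Q.pts m \ {x}) := by
    intro l hl m hm hlm
    simp only [mem_lns] at hl hm
    rw [Finset.disjoint_left]
    rintro z hz hz'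
    simp only [mem_sdiff, mem_pts, mem_singleton] at hz hz'
    exact hlm (Q.unique_line hz.2 hz.1 hl hz'.1 hm)
  have hcard : ∀ l ∈ Q.lns x, (Q.pts l \ {x}).card = s := by
    intro l hl
    simp only [mem_lns] at hl
    rw [card_sdiff_of_subset (by simp [hl]), Q.card_pts, card_singleton]
    omega
  rw [heq, card_biUnion hdisj, Finset.sum_congr rfl hcard, Finset.sum_const,
    smul_eq_mul, Q.card_lns, mul_comm]

noncomputable def tr (x y : P) : Finset P := Q.perp x ∩ Q.perp y

@[simp] lemma mem_tr {x y z : P} :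
    z ∈ Q.tr x y ↔ Q.Collinear x z ∧ Q.Collinear y z := by
  simp [tr]

lemma not_inc_of_not_coll {x y : P} (hxy : x ≠ y) (h : ¬Q.Collinear x y)
    {l : L} (hx : Q.inc x l) : ¬Q.inc y l :=
  fun hy => h ⟨hxy, l, hx, hy⟩

lemma card_tr {x y : P} (hxy : x ≠ y) (h : ¬Q.Collinear x y) :
    (Q.tr x y).card = t + 1 := by
  have heq : Q.tr x y = (Q.lns x).biUnion
      (fun l => (Q.pts l).filter (fun q => Q.Collinear y q)) := by
    ext z
    simp only [mem_tr, mem_biUnion, mem_lns, mem_filter, mem_pts]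
    constructor
    · rintro ⟨⟨hne, l, hxl, hzl⟩, hyz⟩
      exact ⟨l, hxl, hzl, hyz⟩
    · rintro ⟨l, hxl, hzl, hyz⟩
      have hne : x ≠ z := by rintro rfl; exact h (Q.coll_symm hyz)
      exact ⟨⟨hne, l, hxl, hzl⟩, hyz⟩
  have hcard : ∀ l ∈ Q.lns x, ((Q.pts l).filter (fun q => Q.Collinear y q)).card = 1 := by
    intro l hl
    simp only [mem_lns] at hl
    obtain ⟨q, hq, huniq⟩ := Q.unique_coll_on_line (Q.not_inc_of_not_coll hxy h hl)
    rw [Finset.card_eq_one]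
    refine ⟨q, ?_⟩
    ext z
    simp only [mem_filter, mem_pts, mem_singleton]
    exact ⟨fun hz => huniq z hz, fun hz => hz ▸ hq⟩
  have hdisj : ∀ l ∈ Q.lns x, ∀ m ∈ Q.lns x, l ≠ m →
      Disjoint ((Q.pts l).filter (fun q => Q.Collinear y q))
        ((Q.pts m).filter (fun q => Q.Collinear y q)) := by
    intro l hl m hm hlm
    simp only [mem_lns] at hl hm
    rw [Finset.disjoint_left]
    rintro z hz hz'
    simp only [mem_filter, mem_pts] at hz hz'
    have hne : z ≠ x := by rintro rfl; exact h (Q.coll_symm hz.2)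
    exact hlm (Q.unique_line hne hz.1 hl hz'.1 hm)
  rw [heq, card_biUnion hdisj, Finset.sum_congr rfl hcard, Finset.sum_const,
    smul_eq_mul, Q.card_lns, mul_one]

lemma tr_coclique {x y : P} (hxy : x ≠ y) (h : ¬Q.Collinear x y) {w w' : P}
    (hw : w ∈ Q.tr x y) (hw' : w' ∈ Q.tr x y) : ¬Q.Collinear w w' := by
  rw [mem_tr] at hw hw'
  rintro ⟨hne, m, hwm, hw'm⟩
  by_cases hxm : Q.inc x m
  · have hym : ¬Q.inc y m := Q.not_inc_of_not_coll hxy h hxm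
    exact hne (Q.coll_on_line_eq hym hwm hw'm hw.2 hw'.2)
  · exact hne (Q.coll_on_line_eq hxm hwm hw'm hw.1 hw'.1)

/-- points distinct from and not collinear with `x` -/
noncomputable def nx (x : P) : Finset P :=
  Finset.univ.filter (fun z => z ≠ x ∧ ¬Q.Collinear x z)

@[simp] lemma mem_nx {x z : P} : z ∈ Q.nx x ↔ z ≠ x ∧ ¬Q.Collinear x z := by
  simp [nx]

/-- points distinct from and not collinear with both `x` and `y` -/
noncomputable def nset (x y : P) : Finset P :=
  Finset.univ.filter (fun z => z ≠ x ∧ z ≠ y ∧ ¬Q.Collinear x z ∧ ¬Q.Collinear y z)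

@[simp] lemma mem_nset {x y z : P} :
    z ∈ Q.nset x y ↔ z ≠ x ∧ z ≠ y ∧ ¬Q.Collinear x z ∧ ¬Q.Collinear y z := by
  simp [nset]

lemma card_nx_inter_perp {x w : P} (h : Q.Collinear x w) :
    (Q.nx x ∩ Q.perp w).card + s = s * (t + 1) := by
  have hpart : Q.perp w = (Q.nx x ∩ Q.perp w) ∪ ({x} ∪ (Q.perp w ∩ Q.perp x)) := by
    ext z
    simp only [mem_union, mem_inter, mem_nx, mem_perp, mem_singleton]
    constructor
    · intro hz
      by_cases h1 : z = x
      · exact Or.inr (Or.inl h1)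
      · by_cases h2 : Q.Collinear x z
        · exact Or.inr (Or.inr ⟨hz, h2⟩)
        · exact Or.inl ⟨⟨h1, h2⟩, hz⟩
    · rintro ((⟨_, hz⟩) | (rfl | ⟨hz, _⟩))
      · exact hz
      · exact Q.coll_symm h
      · exact hz
  have hd2 : Disjoint ({x} : Finset P) (Q.perp w ∩ Q.perp x) := by
    rw [Finset.disjoint_left]
    rintro z hz hz'
    simp only [mem_singleton] at hz
    simp only [mem_inter, mem_perp] at hz'
    exact Q.coll_irrefl x (hz ▸ hz'.2)
  have hd1 : Disjoint (Q.nx x ∩ Q.perp w) ({x} ∪ (Q.perp w ∩ Q.perp x)) := by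
    rw [Finset.disjoint_left]
    rintro z hz hz'
    simp only [mem_inter, mem_nx, mem_perp] at hz
    simp only [mem_union, mem_singleton, mem_inter, mem_perp] at hz'
    rcases hz' with rfl | hz'
    · exact hz.1.1 rfl
    · exact hz.1.2 hz'.2
  have hwx : Q.Collinear w x := Q.coll_symm h
  have hkey := Q.card_perp_inter hwx
  have hcp := Q.card_perp w
  rw [hpart, card_union_of_disjoint hd1, card_union_of_disjoint hd2,
    card_singleton] at hcp
  linarith

lemma sum_card_filter' {α β : Type*} (A : Finset α) (B : Finset β) (R : α → β → Prop)
    [∀ a b, Decidable (R a b)] :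
    ∑ a ∈ A, (B.filter (fun b => R a b)).card
      = ∑ b ∈ B, (A.filter (fun a => R a b)).card := by
  simp_rw [Finset.card_filter]
  rw [Finset.sum_comm]

lemma card_nx (x : P) : (Q.nx x).card = s * s * t := by
  have key := sum_card_filter' (Q.perp x) (Q.nx x) (fun w z => Q.Collinear w z)
  have hL : ∀ w ∈ Q.perp x, ((Q.nx x).filter (fun z => Q.Collinear w z)).card = s * t := by
    intro w hw
    rw [mem_perp] at hw
    have heq : (Q.nx x).filter (fun z => Q.Collinear w z) = Q.nx x ∩ Q.perp w := by
      ext z; simp [mem_inter]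
    have h0 := Q.card_nx_inter_perp hw
    have : s * (t + 1) = s * t + s := by ring
    rw [heq]; linarith
  have hR : ∀ z ∈ Q.nx x, ((Q.perp x).filter (fun w => Q.Collinear w z)).card = t + 1 := by
    intro z hz
    rw [mem_nx] at hz
    have heq : (Q.perp x).filter (fun w => Q.Collinear w z) = Q.tr x z := by
      ext w
      simp only [mem_filter, mem_perp, mem_tr]
      constructor
      · rintro ⟨h1, h2⟩; exact ⟨h1, Q.coll_symm h2⟩
      · rintro ⟨h1, h2⟩; exact ⟨h1, Q.coll_symm h2⟩
    rw [heq, Q.card_tr (Ne.symm hz.1) hz.2]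
  rw [Finset.sum_congr rfl hL, Finset.sum_congr rfl hR] at key
  simp only [Finset.sum_const, smul_eq_mul] at key
  rw [Q.card_perp x] at key
  have : s * (t + 1) * (s * t) = (s * s * t) * (t + 1) := by ring
  rw [this] at key
  exact Nat.eq_of_mul_eq_mul_right (Nat.succ_pos t) key.symm

lemma card_nset_inter_perp {x y w : P} (hxy : x ≠ y) (hncol : ¬Q.Collinear x y)
    (hw : w ∈ Q.tr x y) : (Q.nset x y ∩ Q.perp w).card + 2 * s = s * (t + 1) := by
  rw [mem_tr] at hw
  obtain ⟨hwx, hwy⟩ := hw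
  have hpart : Q.perp w = (Q.nset x y ∩ Q.perp w) ∪
      (({x} ∪ {y}) ∪ ((Q.perp w ∩ Q.perp x) ∪ (Q.perp w ∩ Q.perp y))) := by
    ext z
    simp only [mem_union, mem_inter, mem_nset, mem_perp, mem_singleton]
    constructor
    · intro hz
      by_cases h1 : z = x
      · exact Or.inr (Or.inl (Or.inl h1))
      by_cases h2 : z = y
      · exact Or.inr (Or.inl (Or.inr h2))
      by_cases h3 : Q.Collinear x z
      · exact Or.inr (Or.inr (Or.inl ⟨hz, h3⟩))
      by_cases h4 : Q.Collinear y z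
      · exact Or.inr (Or.inr (Or.inr ⟨hz, h4⟩))
      exact Or.inl ⟨⟨h1, h2, h3, h4⟩, hz⟩
    · rintro (⟨_, hz⟩ | ((rfl | rfl) | (⟨hz, _⟩ | ⟨hz, _⟩)))
      · exact hz
      · exact Q.coll_symm hwx
      · exact Q.coll_symm hwy
      · exact hz
      · exact hz
  -- disjointness facts
  have hmemx : ∀ z : P, z ∈ Q.perp w ∩ Q.perp x → Q.Collinear w z ∧ Q.Collinear x z := by
    intro z hz; simpa [mem_inter] using hz
  have hdxy : Disjoint (Q.perp w ∩ Q.perp x) (Q.perp w ∩ Q.perp y) := by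
    rw [Finset.disjoint_left]
    rintro z hz hz'
    simp only [mem_inter, mem_perp] at hz hz'
    have hztr : z ∈ Q.tr x y := by rw [mem_tr]; exact ⟨hz.2, hz'.2⟩
    have hwtr : w ∈ Q.tr x y := by rw [mem_tr]; exact ⟨hwx, hwy⟩
    exact Q.tr_coclique hxy hncol hwtr hztr hz.1
  have hdxy2 : Disjoint ({x} ∪ {y} : Finset P)
      ((Q.perp w ∩ Q.perp x) ∪ (Q.perp w ∩ Q.perp y)) := by
    rw [Finset.disjoint_left]
    rintro z hz hz'
    simp only [mem_union, mem_singleton] at hz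
    simp only [mem_union, mem_inter, mem_perp] at hz'
    rcases hz with rfl | rfl
    · rcases hz' with h' | h'
      · exact Q.coll_irrefl z h'.2
      · exact hncol (Q.coll_symm h'.2)
    · rcases hz' with h' | h'
      · exact hncol h'.2
      · exact Q.coll_irrefl z h'.2
  have hdx : Disjoint ({x} : Finset P) ({y} : Finset P) := by
    simp [Finset.disjoint_left, hxy]
  have hd1 : Disjoint (Q.nset x y ∩ Q.perp w)
      (({x} ∪ {y}) ∪ ((Q.perp w ∩ Q.perp x) ∪ (Q.perp w ∩ Q.perp y))) := by
    rw [Finset.disjoint_left]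
    rintro z hz hz'
    simp only [mem_inter, mem_nset, mem_perp] at hz
    simp only [mem_union, mem_singleton, mem_inter, mem_perp] at hz'
    rcases hz' with (rfl | rfl) | (h' | h')
    · exact hz.1.1 rfl
    · exact hz.1.2.1 rfl
    · exact hz.1.2.2.1 h'.2
    · exact hz.1.2.2.2 h'.2
  have hk1 := Q.card_perp_inter (Q.coll_symm hwx)
  have hk2 := Q.card_perp_inter (Q.coll_symm hwy)
  have hcp := Q.card_perp w
  rw [hpart, card_union_of_disjoint hd1, card_union_of_disjoint hdxy2,
    card_union_of_disjoint hdx, card_union_of_disjoint hdxy,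
    card_singleton, card_singleton] at hcp
  linarith

lemma card_nset_inter_two {x y w w' : P} (hxy : x ≠ y) (hncol : ¬Q.Collinear x y)
    (hw : w ∈ Q.tr x y) (hw' : w' ∈ Q.tr x y) (hne : w ≠ w') :
    (Q.nset x y ∩ (Q.perp w ∩ Q.perp w')).card + 2 = t + 1 := by
  have hncol' : ¬Q.Collinear w w' := Q.tr_coclique hxy hncol hw hw'
  rw [mem_tr] at hw hw'
  have hxtr : x ∈ Q.tr w w' := by
    rw [mem_tr]; exact ⟨Q.coll_symm hw.1, Q.coll_symm hw'.1⟩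
  have hytr : y ∈ Q.tr w w' := by
    rw [mem_tr]; exact ⟨Q.coll_symm hw.2, Q.coll_symm hw'.2⟩
  have heq : Q.nset x y ∩ (Q.perp w ∩ Q.perp w') = Q.tr w w' \ ({x} ∪ {y}) := by
    ext z
    simp only [mem_inter, mem_nset, mem_perp, mem_sdiff, mem_tr, mem_union,
      mem_singleton]
    constructor
    · rintro ⟨⟨h1, h2, _, _⟩, h5, h6⟩
      exact ⟨⟨h5, h6⟩, by rintro (rfl | rfl) <;> simp_all⟩
    · rintro ⟨⟨h1, h2⟩, h3⟩
      push_neg at h3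
      have hztr : z ∈ Q.tr w w' := by rw [mem_tr]; exact ⟨h1, h2⟩
      refine ⟨⟨h3.1, h3.2, ?_, ?_⟩, h1, h2⟩
      · exact Q.tr_coclique hne hncol' hxtr hztr
      · exact Q.tr_coclique hne hncol' hytr hztr
  have hsub : ({x} ∪ {y} : Finset P) ⊆ Q.tr w w' := by
    intro z hz
    simp only [mem_union, mem_singleton] at hz
    rcases hz with rfl | rfl <;> assumption
  have hkey := Finset.card_sdiff_add_card_eq_card hsub
  have hc2 : ({x} ∪ {y} : Finset P).card = 2 := by
    rw [card_union_of_disjoint (by simp [Finset.disjoint_left, hxy])]; simp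
  rw [hc2, Q.card_tr hne hncol'] at hkey
  rw [heq]
  omega

lemma card_nset {x y : P} (hxy : x ≠ y) (hncol : ¬Q.Collinear x y) :
    (Q.nset x y).card + s * t + s = s * s * t + t := by
  have hpart : Q.nx x = Q.nset x y ∪ ({y} ∪ (Q.nx x ∩ Q.perp y)) := by
    ext z
    simp only [mem_union, mem_inter, mem_nset, mem_nx, mem_perp, mem_singleton]
    constructor
    · rintro ⟨h1, h2⟩
      by_cases h3 : z = y
      · exact Or.inr (Or.inl h3)
      by_cases h4 : Q.Collinear y z
      · exact Or.inr (Or.inr ⟨⟨h1, h2⟩, h4⟩)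
      exact Or.inl ⟨h1, h3, h2, h4⟩
    · rintro (⟨h1, _, h2, _⟩ | (rfl | ⟨hz, _⟩))
      · exact ⟨h1, h2⟩
      · exact ⟨Ne.symm hxy, hncol⟩
      · exact hz
  have hd2 : Disjoint ({y} : Finset P) (Q.nx x ∩ Q.perp y) := by
    rw [Finset.disjoint_left]
    rintro z hz hz'
    simp only [mem_singleton] at hz
    simp only [mem_inter, mem_perp] at hz'
    exact Q.coll_irrefl y (hz ▸ hz'.2)
  have hd1 : Disjoint (Q.nset x y) ({y} ∪ (Q.nx x ∩ Q.perp y)) := by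
    rw [Finset.disjoint_left]
    rintro z hz hz'
    simp only [mem_nset] at hz
    simp only [mem_union, mem_singleton, mem_inter, mem_perp] at hz'
    rcases hz' with rfl | hz'
    · exact hz.2.1 rfl
    · exact hz.2.2.2 hz'.2
  have hiy : Q.nx x ∩ Q.perp y = Q.perp y \ Q.tr x y := by
    ext z
    simp only [mem_inter, mem_nx, mem_perp, mem_sdiff, mem_tr]
    constructor
    · rintro ⟨⟨h1, h2⟩, h3⟩
      exact ⟨h3, fun h => h2 h.1⟩
    · rintro ⟨h1, h2⟩
      refine ⟨⟨?_, fun hc => h2 ⟨hc, h1⟩⟩, h1⟩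
      rintro rfl; exact hncol (Q.coll_symm h1)
  have hsub : Q.tr x y ⊆ Q.perp y := by
    intro z hz; rw [mem_tr] at hz; rw [mem_perp]; exact hz.2
  have hkey := Finset.card_sdiff_add_card_eq_card hsub
  rw [Q.card_tr hxy hncol, Q.card_perp y] at hkey
  have hcnx := Q.card_nx x
  rw [hpart, card_union_of_disjoint hd1, card_union_of_disjoint hd2,
    card_singleton, hiy] at hcnx
  have e1 : s * (t + 1) = s * t + s := by ring
  linarith

set_option maxHeartbeats 1000000 in
theorem t_le_s_sq {P L : Type*} [Fintype P] [Fintype L] [Nonempty P]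
    {s t : ℕ} (hs : 2 ≤ s) (ht : 2 ≤ t) (Q : GenQuadrangle P L s t) :
    t ≤ s * s := by
  obtain ⟨x⟩ := ‹Nonempty P›
  -- find a point y not collinear with x
  have hnxcard := Q.card_nx x
  have hnxne : (Q.nx x).Nonempty := by
    rw [← Finset.card_pos, hnxcard]
    have : 0 < s := by omega
    have : 0 < t := by omega
    positivity
  obtain ⟨y, hy⟩ := hnxne
  rw [mem_nx] at hy
  obtain ⟨hyx, hncol⟩ := hy
  have hxy : x ≠ y := Ne.symm hyx
  set N := Q.nset x y with hN
  set T := Q.tr x y with hT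
  have hTcard : T.card = t + 1 := Q.card_tr hxy hncol
  set f : P → ℕ := fun z => (T.filter (fun w => Q.Collinear w z)).card with hf
  have hswap := sum_card_filter' T N (fun w z => Q.Collinear w z)
  have hinter : ∀ w : P, N.filter (fun z => Q.Collinear w z) = N ∩ Q.perp w := by
    intro w; ext z; simp [mem_inter, hN]
  -- S1 : sum of f over N
  have hperw : ∀ w ∈ T, (N.filter (fun z => Q.Collinear w z)).card + 2 * s
      = s * (t + 1) := by
    intro w hw
    rw [hinter w]
    exact Q.card_nset_inter_perp hxy hncol hw
  have hS1 : (∑ z ∈ N, f z) + (t + 1) * (2 * s) = (t + 1) * (s * (t + 1)) := by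
    have hc := Finset.sum_congr rfl hperw
    rw [Finset.sum_add_distrib, Finset.sum_const, Finset.sum_const, hTcard,
      smul_eq_mul, smul_eq_mul] at hc
    rw [← hswap]
    exact hc
  -- S2 : sum of squares of f over N
  have hsq : ∀ z ∈ N, f z ^ 2
      = ((T ×ˢ T).filter (fun q : P × P => Q.Collinear q.1 z ∧ Q.Collinear q.2 z)).card := by
    intro z _
    rw [sq, ← Finset.card_product]
    congr 1
    ext ⟨a, b⟩
    simp only [Finset.mem_product, Finset.mem_filter]
    tauto
  have hS2a : (∑ z ∈ N, f z ^ 2)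
      = ∑ q ∈ T ×ˢ T, (N.filter (fun z => Q.Collinear q.1 z ∧ Q.Collinear q.2 z)).card := by
    rw [Finset.sum_congr rfl hsq,
      ← sum_card_filter' (T ×ˢ T) N (fun q z => Q.Collinear q.1 z ∧ Q.Collinear q.2 z)]
  have hS2 : (∑ z ∈ N, f z ^ 2) + (t + 1) * (t * 2)
      = (∑ z ∈ N, f z) + (t + 1) * (t * (t + 1)) := by
    rw [hS2a, Finset.sum_product]
    have hrow : ∀ w ∈ T,
        (∑ w' ∈ T, (N.filter (fun z => Q.Collinear w z ∧ Q.Collinear w' z)).card) + t * 2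
        = (N.filter (fun z => Q.Collinear w z)).card + t * (t + 1) := by
      intro w hw
      have hdiag : (N.filter (fun z => Q.Collinear w z ∧ Q.Collinear w z))
          = N.filter (fun z => Q.Collinear w z) := by
        ext z; simp
      have hoff : ∀ w' ∈ T.erase w,
          (N.filter (fun z => Q.Collinear w z ∧ Q.Collinear w' z)).card + 2 = t + 1 := by
        intro w' hw'
        have hw'T : w' ∈ T := Finset.mem_of_mem_erase hw'
        have hne : w ≠ w' := (Finset.ne_of_mem_erase hw').symm
        have heq2 : N.filter (fun z => Q.Collinear w z ∧ Q.Collinear w' z)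
            = N ∩ (Q.perp w ∩ Q.perp w') := by
          ext z; simp [mem_inter, hN, and_assoc]
        rw [heq2]
        exact Q.card_nset_inter_two hxy hncol hw hw'T hne
      have hsplit := Finset.add_sum_erase T
        (fun w' => (N.filter (fun z => Q.Collinear w z ∧ Q.Collinear w' z)).card) hw
      have hcerase : (T.erase w).card = t := by
        rw [Finset.card_erase_of_mem hw, hTcard]
        omega
      have hoffsum := Finset.sum_congr rfl hoff
      rw [Finset.sum_add_distrib, Finset.sum_const, Finset.sum_const, hcerase,
        smul_eq_mul, smul_eq_mul] at hoffsum
      rw [hdiag] at hsplit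
      linarith [hoffsum, hsplit]
    have hc := Finset.sum_congr rfl hrow
    rw [Finset.sum_add_distrib, Finset.sum_add_distrib, Finset.sum_const,
      Finset.sum_const, hTcard, smul_eq_mul, smul_eq_mul] at hc
    rw [hswap] at hc
    exact hc
  -- Cauchy–Schwarz
  have hCS := Finset.sum_mul_sq_le_sq_mul_sq N f (fun _ => 1)
  simp only [mul_one, one_pow, Finset.sum_const, smul_eq_mul] at hCS
  -- pass to integers
  have hD := Q.card_nset hxy hncol
  set A := ∑ z ∈ N, f z with hA
  set B := ∑ z ∈ N, f z ^ 2 with hB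
  set D := N.card with hDdef
  have e1 : (A : ℤ) + (t + 1) * (2 * s) = (t + 1) * (s * (t + 1)) := by exact_mod_cast hS1
  have e2 : (B : ℤ) + (t + 1) * (t * 2) = (A : ℤ) + (t + 1) * (t * (t + 1)) := by
    exact_mod_cast hS2
  have e3 : (D : ℤ) + s * t + s = s * s * t + t := by exact_mod_cast hD
  have e4 : (A : ℤ) ^ 2 ≤ (B : ℤ) * (D : ℤ) := by exact_mod_cast hCS
  have hsz : (2 : ℤ) ≤ (s : ℤ) := by exact_mod_cast hs
  have htz : (2 : ℤ) ≤ (t : ℤ) := by exact_mod_cast ht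
  have hA' : (A : ℤ) = s * ((t + 1) * (t - 1)) := by linear_combination e1
  have hB' : (B : ℤ) = (s + t) * ((t + 1) * (t - 1)) := by linear_combination e2 + hA'
  have hpos : (0 : ℤ) < (t + 1) * (t - 1) := by nlinarith
  have key : (s : ℤ) ^ 2 * ((t + 1) * (t - 1)) ≤ (s + t) * (D : ℤ) := by
    have h7 : (s : ℤ) ^ 2 * ((t + 1) * (t - 1)) * ((t + 1) * (t - 1))
        ≤ (s + t) * (D : ℤ) * ((t + 1) * (t - 1)) := by
      calc (s : ℤ) ^ 2 * ((t + 1) * (t - 1)) * ((t + 1) * (t - 1))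
          = (A : ℤ) ^ 2 := by rw [hA']; ring
        _ ≤ (B : ℤ) * (D : ℤ) := e4
        _ = (s + t) * (D : ℤ) * ((t + 1) * (t - 1)) := by rw [hB']; ring
    exact le_of_mul_le_mul_right h7 hpos
  have hfact : (t : ℤ) * (s - 1) * (s * s - t)
      = (s + t) * (D : ℤ) - (s : ℤ) ^ 2 * ((t + 1) * (t - 1)) := by
    linear_combination (-(s : ℤ) - t) * e3
  by_contra hcon
  push_neg at hcon
  have hcon' : (s : ℤ) * s + 1 ≤ t := by exact_mod_cast hcon
  nlinarith [key, hfact, mul_pos (show (0:ℤ) < t by linarith) (show (0:ℤ) < s - 1 by linarith)]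

/-- The dual generalised quadrangle: swap points and lines. -/
noncomputable def dual {P L : Type*} {s t : ℕ} (Q : GenQuadrangle P L s t) :
    GenQuadrangle L P t s where
  inc l p := Q.inc p l
  pts_per_line p := Q.lines_per_pt p
  lines_per_pt l := Q.pts_per_line l
  unique_line := by
    intro l m p q hlm hpl hpm hql hqm
    by_contra hpq
    exact hlm (Q.unique_line hpq hpl hql hpm hqm)
  gq_axiom := by
    intro a b h
    obtain ⟨d, ⟨hda, m, hbm, hdm⟩, huniq⟩ := Q.gq_axiom b a h
    refine ⟨m, ⟨hbm, d, hda, hdm⟩, ?_⟩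
    rintro c ⟨hbc, d', hd'a, hd'c⟩
    have hd' : d' = d := huniq d' ⟨hd'a, c, hbc, hd'c⟩
    subst hd'
    have hbd : b ≠ d' := fun he => h (he ▸ hd'a)
    exact Q.unique_line hbd hbc hd'c hbm hdm

end GenQuadrangle

/-- Higman's inequality: in a finite thick generalised quadrangle of order
(s,t) we have s ≤ t². -/
theorem higman_inequality {P L : Type*} [Fintype P] [Fintype L] [Nonempty P]
    {s t : ℕ} (hs : 2 ≤ s) (ht : 2 ≤ t) (Q : GenQuadrangle P L s t) :
    s ≤ t ^ 2 := by
  have hL : Nonempty L := by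
    obtain ⟨x⟩ := ‹Nonempty P›
    have h := Q.card_lns x
    have hne : (Q.lns x).Nonempty := by
      rw [← Finset.card_pos, h]; omega
    exact ⟨hne.choose⟩
  have h := GenQuadrangle.t_le_s_sq ht hs Q.dual
  rwa [pow_two]
end
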